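/- arXiv:2004.09202 — 2 statements merged into one kernel-verified Lean document; each statement's English description precedes it below -/
import Mathlib

section
/- (Uniqueness via strict convexity of the weighted square loss.) Let $P_1,P_2$ be probability measures equivalent to $\mathbb{P}$, $\xi\in L^2(P_i)$, and set $\hat\eta_i=E_{P_i}[\xi|\mathcal{C}]$. For $\lambda\in(0,1)$ let $P^\lambda=\lambda P_1+(1-\lambda)P_2$, $\lambda_1=\lambda E_{P^\lambda}[\frac{dP_1}{dP^\lambda}|\mathcal{C}]$, $\lambda_2=(1-\lambda)E_{P^\lambda}[\frac{dP_2}{dP^\lambda}|\mathcal{C}]$. Then $\lambda_1+\lambda_2=1$, $E_{P^\lambda}[\xi|\mathcal{C}]=\lambda_1\hat\eta_1+\lambda_2\hat\eta_2$, and $E_{P^\lambda}[(\xi-E_{P^\lambda}[\xi|\mathcal{C}])^2]=\lambda E_{P_1}[(\xi-\hat\eta_1)^2]+(1-\lambda)E_{P_2}[(\xi-\hat\eta_2)^2]+\lambda E_{P_1}[\lambda_2^2(\hat\eta_1-\hat\eta_2)^2]+(1-\lambda)E_{P_2}[\lambda_1^2(\hat\eta_1-\hat\eta_2)^2]$. 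-/
/-!
Both `P₁` and `P₂` are absolutely continuous with respect to `P^λ`, with densities `f₁, f₂`
satisfying `λ f₁ + (1 - λ) f₂ = 1`; conditioning this identity gives `λ₁ + λ₂ = 1`. Multiplying
it by `ξ` and applying the conditional Bayes formula `E_{P^λ}[fᵢ ξ | 𝒞] = E_{P^λ}[fᵢ | 𝒞] η̂ᵢ`
to each summand gives `E_{P^λ}[ξ | 𝒞] = λ₁ η̂₁ + λ₂ η̂₂ =: η`. Finally the square loss under
`P^λ` splits as `λ E_{P₁}[(ξ - η)²] + (1 - λ) E_{P₂}[(ξ - η)²]`, and since `η` is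
`𝒞`-measurable, Pythagoras gives `E_{Pᵢ}[(ξ - η)²] = E_{Pᵢ}[(ξ - η̂ᵢ)²] + E_{Pᵢ}[(η̂ᵢ - η)²]`,
where `η̂₁ - η = λ₂ (η̂₁ - η̂₂)` and `η̂₂ - η = -λ₁ (η̂₁ - η̂₂)`.
-/

open MeasureTheory

/-- The mixture `λ P₁ + (1-λ) P₂` of two measures. -/
noncomputable def mixMeasure {Ω : Type*} {mΩ : MeasurableSpace Ω}
    (lam : ℝ) (P1 P2 : Measure Ω) : Measure Ω :=
  ENNReal.ofReal lam • P1 + ENNReal.ofReal (1 - lam) • P2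

section

variable {Ω : Type*} {m m0 : MeasurableSpace Ω}

instance isFiniteMeasure_ofReal_smul {P : Measure Ω} [IsFiniteMeasure P] (c : ℝ) :
    IsFiniteMeasure (ENNReal.ofReal c • P) :=
  inferInstanceAs (IsFiniteMeasure (c.toNNReal • P))

section ConditionalExpectation

variable {μ : Measure Ω}

lemma condExp_const_mul_add_const_mul (a b : ℝ) {f g : Ω → ℝ} (hf : Integrable f μ)
    (hg : Integrable g μ) :
    μ[fun ω => a * f ω + b * g ω | m] =ᵐ[μ] fun ω => a * μ[f | m] ω + b * μ[g | m] ω :=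
  (condExp_add (hf.const_mul a) (hg.const_mul b) m).trans
    ((condExp_smul a f m).add (condExp_smul b g m))

/-- Conditional Bayes formula `E_P[ξ | m] = E_ν[ξ dP/dν | m] / E_ν[dP/dν | m]`, in product form. -/
lemma condExp_toReal_rnDeriv_mul (hm : m ≤ m0) {P ν : Measure Ω} [IsFiniteMeasure P]
    [IsFiniteMeasure ν] (hPν : P ≪ ν) {ξ : Ω → ℝ} (hξ : Integrable ξ P) :
    ν[fun ω => (P.rnDeriv ν ω).toReal * ξ ω | m] =ᵐ[ν]
      fun ω => ν[fun ω => (P.rnDeriv ν ω).toReal | m] ω * P[ξ | m] ω := by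
  set f : Ω → ℝ := fun ω => (P.rnDeriv ν ω).toReal
  set η := P[ξ | m]
  have hfξ : Integrable (fun ω => f ω * ξ ω) ν := (integrable_rnDeriv_smul_iff hPν).mpr hξ
  have hfη : Integrable (fun ω => f ω * η ω) ν :=
    (integrable_rnDeriv_smul_iff hPν).mpr integrable_condExp
  have hηf : Integrable (η * f) ν := hfη.congr (ae_of_all _ fun ω => mul_comm _ _)
  have hpull : ν[η * f | m] =ᵐ[ν] η * ν[f | m] :=
    condExp_mul_of_stronglyMeasurable_left stronglyMeasurable_condExp hηf
      Measure.integrable_toReal_rnDeriv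
  refine (ae_eq_condExp_of_forall_setIntegral_eq hm hfξ
    (fun s hs _ => (integrable_condExp.congr hpull).integrableOn.congr_fun
      (fun ω _ => mul_comm _ _) (hm s hs)) ?_
    (stronglyMeasurable_condExp.mul stronglyMeasurable_condExp).aestronglyMeasurable).symm
  intro s hs _
  calc ∫ ω in s, ν[f | m] ω * η ω ∂ν = ∫ ω in s, ν[η * f | m] ω ∂ν :=
        setIntegral_congr_ae (hm s hs)
          (hpull.mono fun ω hω _ => by rw [hω, Pi.mul_apply, mul_comm])
    _ = ∫ ω in s, f ω * η ω ∂ν := by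
        rw [setIntegral_condExp hm hηf hs]
        simp only [Pi.mul_apply, mul_comm]
    _ = ∫ ω in s, η ω ∂P := setIntegral_rnDeriv_smul hPν (hm s hs)
    _ = ∫ ω in s, ξ ω ∂P := setIntegral_condExp hm hξ hs
    _ = ∫ ω in s, f ω * ξ ω ∂ν := (setIntegral_rnDeriv_smul hPν (hm s hs)).symm

lemma integral_mul_sub_condExp_eq_zero (hm : m ≤ m0) [IsFiniteMeasure μ] {g ξ : Ω → ℝ}
    (hg : StronglyMeasurable[m] g) (hgξ : Integrable (fun ω => g ω * ξ ω) μ)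
    (hξ : Integrable ξ μ) :
    ∫ ω, g ω * (ξ ω - μ[ξ | m] ω) ∂μ = 0 := by
  have hpull : μ[fun ω => g ω * ξ ω | m] =ᵐ[μ] fun ω => g ω * μ[ξ | m] ω :=
    condExp_mul_of_stronglyMeasurable_left hg hgξ hξ
  simp only [mul_sub]
  rw [integral_sub hgξ (integrable_condExp.congr hpull), ← integral_congr_ae hpull,
    integral_condExp hm, sub_self]

lemma integral_sq_sub_eq_integral_sq_sub_condExp_add (hm : m ≤ m0) [IsFiniteMeasure μ]
    {ξ η : Ω → ℝ} (hξ : MemLp ξ 2 μ) (hη : MemLp η 2 μ) (hηm : StronglyMeasurable[m] η) :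
    ∫ ω, (ξ ω - η ω) ^ 2 ∂μ
      = ∫ ω, (ξ ω - μ[ξ | m] ω) ^ 2 ∂μ + ∫ ω, (μ[ξ | m] ω - η ω) ^ 2 ∂μ := by
  set e := μ[ξ | m]
  have he : MemLp e 2 μ := hξ.condExp one_le_two
  have hcross : ∫ ω, (e ω - η ω) * (ξ ω - e ω) ∂μ = 0 :=
    integral_mul_sub_condExp_eq_zero hm (stronglyMeasurable_condExp.sub hηm)
      ((he.sub hη).integrable_mul hξ) (hξ.integrable one_le_two)
  have hsq1 : Integrable (fun ω => (ξ ω - e ω) ^ 2) μ := (hξ.sub he).integrable_sq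
  have hsq2 : Integrable (fun ω => (e ω - η ω) ^ 2) μ := (he.sub hη).integrable_sq
  have hmul : Integrable (fun ω => 2 * ((e ω - η ω) * (ξ ω - e ω))) μ :=
    ((he.sub hη).integrable_mul (hξ.sub he)).const_mul 2
  calc ∫ ω, (ξ ω - η ω) ^ 2 ∂μ
      = ∫ ω, (ξ ω - e ω) ^ 2 + (2 * ((e ω - η ω) * (ξ ω - e ω)) + (e ω - η ω) ^ 2) ∂μ := by
        congr 1; funext ω; ring
    _ = ∫ ω, (ξ ω - e ω) ^ 2 ∂μ + ∫ ω, (e ω - η ω) ^ 2 ∂μ := by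
        have hrest : Integrable
            (fun ω => 2 * ((e ω - η ω) * (ξ ω - e ω)) + (e ω - η ω) ^ 2) μ := hmul.add hsq2
        rw [integral_add hsq1 hrest, integral_add hmul hsq2, integral_const_mul,
          hcross, mul_zero, zero_add]

end ConditionalExpectation

namespace mixMeasure

variable {P1 P2 : Measure Ω} {lam : ℝ}

instance [IsFiniteMeasure P1] [IsFiniteMeasure P2] : IsFiniteMeasure (mixMeasure lam P1 P2) := by
  unfold mixMeasure; infer_instance

lemma left_le_smul (hlam : 0 < lam) : P1 ≤ (ENNReal.ofReal lam)⁻¹ • mixMeasure lam P1 P2 := by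
  have hc : ENNReal.ofReal lam ≠ 0 := by simpa using hlam
  calc P1 = (ENNReal.ofReal lam)⁻¹ • ENNReal.ofReal lam • P1 := by
        rw [smul_smul, ENNReal.inv_mul_cancel hc ENNReal.ofReal_ne_top, one_smul]
    _ ≤ (ENNReal.ofReal lam)⁻¹ • mixMeasure lam P1 P2 := by
        gcongr; exact Measure.le_add_right le_rfl

lemma right_le_smul (hlam : lam < 1) :
    P2 ≤ (ENNReal.ofReal (1 - lam))⁻¹ • mixMeasure lam P1 P2 := by
  have hc : ENNReal.ofReal (1 - lam) ≠ 0 := by simpa using hlam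
  calc P2 = (ENNReal.ofReal (1 - lam))⁻¹ • ENNReal.ofReal (1 - lam) • P2 := by
        rw [smul_smul, ENNReal.inv_mul_cancel hc ENNReal.ofReal_ne_top, one_smul]
    _ ≤ (ENNReal.ofReal (1 - lam))⁻¹ • mixMeasure lam P1 P2 := by
        gcongr; exact Measure.le_add_left le_rfl

lemma memLp_two {f : Ω → ℝ} (hf1 : MemLp f 2 P1) (hf2 : MemLp f 2 P2) :
    MemLp f 2 (mixMeasure lam P1 P2) := by
  refine (memLp_two_iff_integrable_sq ?_).mpr ?_
  · exact (hf1.1.smul_measure _).add_measure (hf2.1.smul_measure _)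
  · exact (hf1.integrable_sq.smul_measure ENNReal.ofReal_ne_top).add_measure
      (hf2.integrable_sq.smul_measure ENNReal.ofReal_ne_top)

lemma integral_eq (h0 : 0 ≤ lam) (h1 : lam ≤ 1) {f : Ω → ℝ} (hf1 : Integrable f P1)
    (hf2 : Integrable f P2) :
    ∫ ω, f ω ∂mixMeasure lam P1 P2 = lam * ∫ ω, f ω ∂P1 + (1 - lam) * ∫ ω, f ω ∂P2 := by
  rw [mixMeasure, integral_add_measure (hf1.smul_measure ENNReal.ofReal_ne_top)
      (hf2.smul_measure ENNReal.ofReal_ne_top), integral_smul_measure, integral_smul_measure,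
    ENNReal.toReal_ofReal h0, ENNReal.toReal_ofReal (sub_nonneg.mpr h1), smul_eq_mul, smul_eq_mul]

lemma toReal_rnDeriv_combination [IsFiniteMeasure P1] [IsFiniteMeasure P2] (h0 : 0 ≤ lam)
    (h1 : lam ≤ 1) :
    ∀ᵐ ω ∂mixMeasure lam P1 P2, lam * (P1.rnDeriv (mixMeasure lam P1 P2) ω).toReal
      + (1 - lam) * (P2.rnDeriv (mixMeasure lam P1 P2) ω).toReal = 1 := by
  set ν := mixMeasure lam P1 P2
  have hadd : ν.rnDeriv ν =ᵐ[ν]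
      (ENNReal.ofReal lam • P1).rnDeriv ν + (ENNReal.ofReal (1 - lam) • P2).rnDeriv ν :=
    Measure.rnDeriv_add _ _ _
  filter_upwards [Measure.rnDeriv_self ν, hadd,
    Measure.rnDeriv_smul_left_of_ne_top P1 ν ENNReal.ofReal_ne_top,
    Measure.rnDeriv_smul_left_of_ne_top P2 ν ENNReal.ofReal_ne_top,
    Measure.rnDeriv_lt_top P1 ν, Measure.rnDeriv_lt_top P2 ν] with ω hself hsum hs1 hs2 hf1 hf2
  rw [hself, Pi.add_apply, hs1, hs2, Pi.smul_apply, Pi.smul_apply, smul_eq_mul,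
    smul_eq_mul] at hsum
  have := congrArg ENNReal.toReal hsum
  rwa [ENNReal.toReal_one, ENNReal.toReal_add (by finiteness) (by finiteness),
    ENNReal.toReal_mul, ENNReal.toReal_mul, ENNReal.toReal_ofReal h0,
    ENNReal.toReal_ofReal (sub_nonneg.mpr h1), eq_comm] at this

end mixMeasure

/-- The paper's conditional weights: `λ₁ = condWeight m lam P1 (mixMeasure lam P1 P2)` and
`λ₂ = condWeight m (1 - lam) P2 (mixMeasure lam P1 P2)`. -/
noncomputable def condWeight (m : MeasurableSpace Ω) (c : ℝ) (P ν : Measure[m0] Ω) (ω : Ω) :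
    ℝ :=
  c * ν[fun ω' => (P.rnDeriv ν ω').toReal | m] ω

section MixtureIdentities

variable {P1 P2 : Measure Ω} [IsFiniteMeasure P1] [IsFiniteMeasure P2] {lam : ℝ} {ξ : Ω → ℝ}

lemma condWeight_add_condWeight (hm : m ≤ m0) (h0 : 0 ≤ lam) (h1 : lam ≤ 1) :
    ∀ᵐ ω ∂mixMeasure lam P1 P2, condWeight m lam P1 (mixMeasure lam P1 P2) ω
      + condWeight m (1 - lam) P2 (mixMeasure lam P1 P2) ω = 1 := by
  set ν := mixMeasure lam P1 P2
  have hlin := condExp_const_mul_add_const_mul (m := m) lam (1 - lam)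
    (Measure.integrable_toReal_rnDeriv (μ := P1) (ν := ν))
    (Measure.integrable_toReal_rnDeriv (μ := P2) (ν := ν))
  have hone := (condExp_congr_ae (m := m) (mixMeasure.toReal_rnDeriv_combination h0 h1)).trans
    (condExp_const (μ := ν) hm (1 : ℝ)).eventuallyEq
  exact hlin.symm.trans hone

lemma condExp_eq_condWeight_mul_add (hm : m ≤ m0) (hlam : lam ∈ Set.Ioo 0 1)
    (hξ1 : Integrable ξ P1) (hξ2 : Integrable ξ P2) :
    (mixMeasure lam P1 P2)[ξ | m] =ᵐ[mixMeasure lam P1 P2] fun ω =>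
      condWeight m lam P1 (mixMeasure lam P1 P2) ω * P1[ξ | m] ω
        + condWeight m (1 - lam) P2 (mixMeasure lam P1 P2) ω * P2[ξ | m] ω := by
  set ν := mixMeasure lam P1 P2
  have hP1 : P1 ≪ ν := Measure.absolutelyContinuous_of_le_smul (mixMeasure.left_le_smul hlam.1)
  have hP2 : P2 ≪ ν := Measure.absolutelyContinuous_of_le_smul (mixMeasure.right_le_smul hlam.2)
  have hsplit : ξ =ᵐ[ν] fun ω =>
      lam * ((P1.rnDeriv ν ω).toReal * ξ ω) + (1 - lam) * ((P2.rnDeriv ν ω).toReal * ξ ω) := by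
    filter_upwards [mixMeasure.toReal_rnDeriv_combination hlam.1.le hlam.2.le] with ω hω
    linear_combination -ξ ω * hω
  have hfξ1 : Integrable (fun ω => (P1.rnDeriv ν ω).toReal * ξ ω) ν :=
    (integrable_rnDeriv_smul_iff hP1).mpr hξ1
  have hfξ2 : Integrable (fun ω => (P2.rnDeriv ν ω).toReal * ξ ω) ν :=
    (integrable_rnDeriv_smul_iff hP2).mpr hξ2
  filter_upwards [condExp_congr_ae (m := m) hsplit,
    condExp_const_mul_add_const_mul (m := m) lam (1 - lam) hfξ1 hfξ2,
    condExp_toReal_rnDeriv_mul hm hP1 hξ1, condExp_toReal_rnDeriv_mul hm hP2 hξ2]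
    with ω hsplit hlin hbayes1 hbayes2
  rw [hsplit, hlin, hbayes1, hbayes2, condWeight, condWeight]
  ring

lemma integral_sq_sub_condExp_mixMeasure (hm : m ≤ m0) (hlam : lam ∈ Set.Ioo 0 1)
    (hξ1 : MemLp ξ 2 P1) (hξ2 : MemLp ξ 2 P2) :
    ∫ ω, (ξ ω - (mixMeasure lam P1 P2)[ξ | m] ω) ^ 2 ∂mixMeasure lam P1 P2
      = lam * ∫ ω, (ξ ω - P1[ξ | m] ω) ^ 2 ∂P1 + (1 - lam) * ∫ ω, (ξ ω - P2[ξ | m] ω) ^ 2 ∂P2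
        + lam * ∫ ω, condWeight m (1 - lam) P2 (mixMeasure lam P1 P2) ω ^ 2
            * (P1[ξ | m] ω - P2[ξ | m] ω) ^ 2 ∂P1
        + (1 - lam) * ∫ ω, condWeight m lam P1 (mixMeasure lam P1 P2) ω ^ 2
            * (P1[ξ | m] ω - P2[ξ | m] ω) ^ 2 ∂P2 := by
  have hweights := condWeight_add_condWeight (P1 := P1) (P2 := P2) hm hlam.1.le hlam.2.le
  have hcond := condExp_eq_condWeight_mul_add hm hlam (hξ1.integrable one_le_two)
    (hξ2.integrable one_le_two)
  set ν := mixMeasure lam P1 P2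
  set η := ν[ξ | m]
  have hle1 : P1 ≤ (ENNReal.ofReal lam)⁻¹ • ν := mixMeasure.left_le_smul hlam.1
  have hle2 : P2 ≤ (ENNReal.ofReal (1 - lam))⁻¹ • ν := mixMeasure.right_le_smul hlam.2
  have hη : MemLp η 2 ν := (mixMeasure.memLp_two hξ1 hξ2).condExp one_le_two
  have hη1 : MemLp η 2 P1 := hη.of_measure_le_smul (by simpa using hlam.1) hle1
  have hη2 : MemLp η 2 P2 := hη.of_measure_le_smul (by simpa using hlam.2) hle2
  have hsq1 : Integrable (fun ω => (ξ ω - η ω) ^ 2) P1 := (hξ1.sub hη1).integrable_sq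
  have hsq2 : Integrable (fun ω => (ξ ω - η ω) ^ 2) P2 := (hξ2.sub hη2).integrable_sq
  have hgap1 : ∀ᵐ ω ∂P1, (P1[ξ | m] ω - η ω) ^ 2
      = condWeight m (1 - lam) P2 ν ω ^ 2 * (P1[ξ | m] ω - P2[ξ | m] ω) ^ 2 := by
    filter_upwards [Measure.absolutelyContinuous_of_le_smul hle1 hweights,
      Measure.absolutelyContinuous_of_le_smul hle1 hcond] with ω hw hη
    rw [hη, ← mul_pow]
    congr 1
    linear_combination P1[ξ | m] ω * hw.symm
  have hgap2 : ∀ᵐ ω ∂P2, (P2[ξ | m] ω - η ω) ^ 2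
      = condWeight m lam P1 ν ω ^ 2 * (P1[ξ | m] ω - P2[ξ | m] ω) ^ 2 := by
    filter_upwards [Measure.absolutelyContinuous_of_le_smul hle2 hweights,
      Measure.absolutelyContinuous_of_le_smul hle2 hcond] with ω hw hη
    rw [hη, ← mul_pow, ← neg_sq (condWeight m lam P1 ν ω * _)]
    congr 1
    linear_combination P2[ξ | m] ω * hw.symm
  rw [mixMeasure.integral_eq hlam.1.le hlam.2.le hsq1 hsq2,
    integral_sq_sub_eq_integral_sq_sub_condExp_add hm hξ1 hη1 stronglyMeasurable_condExp,
    integral_sq_sub_eq_integral_sq_sub_condExp_add hm hξ2 hη2 stronglyMeasurable_condExp,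
    integral_congr_ae hgap1, integral_congr_ae hgap2]
  ring

end MixtureIdentities

end

theorem stmt16_general {Ω : Type*} [m0 : MeasurableSpace Ω]
    (P1 P2 : Measure Ω) [IsProbabilityMeasure P1] [IsProbabilityMeasure P2]
    (m : MeasurableSpace Ω) (hm : m ≤ m0)
    (ξ : Ω → ℝ) (hξ1 : MemLp ξ 2 P1) (hξ2 : MemLp ξ 2 P2)
    (lam : ℝ) (hlam : lam ∈ Set.Ioo (0 : ℝ) 1) :
    (∀ᵐ ω ∂(mixMeasure lam P1 P2),
      lam * ((mixMeasure lam P1 P2)[fun ω' => (P1.rnDeriv (mixMeasure lam P1 P2) ω').toReal | m]) ω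
        + (1 - lam) * ((mixMeasure lam P1 P2)[fun ω' => (P2.rnDeriv (mixMeasure lam P1 P2) ω').toReal | m]) ω
        = 1) ∧
    (((mixMeasure lam P1 P2)[ξ | m]) =ᵐ[mixMeasure lam P1 P2] fun ω =>
      lam * ((mixMeasure lam P1 P2)[fun ω' => (P1.rnDeriv (mixMeasure lam P1 P2) ω').toReal | m]) ω
          * (P1[ξ | m]) ω
        + (1 - lam) * ((mixMeasure lam P1 P2)[fun ω' => (P2.rnDeriv (mixMeasure lam P1 P2) ω').toReal | m]) ω
          * (P2[ξ | m]) ω) ∧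
    ((∫ ω, (ξ ω - ((mixMeasure lam P1 P2)[ξ | m]) ω) ^ 2 ∂(mixMeasure lam P1 P2))
      = lam * (∫ ω, (ξ ω - (P1[ξ | m]) ω) ^ 2 ∂P1)
        + (1 - lam) * (∫ ω, (ξ ω - (P2[ξ | m]) ω) ^ 2 ∂P2)
        + lam * (∫ ω, ((1 - lam) * ((mixMeasure lam P1 P2)[fun ω' => (P2.rnDeriv (mixMeasure lam P1 P2) ω').toReal | m]) ω) ^ 2
            * ((P1[ξ | m]) ω - (P2[ξ | m]) ω) ^ 2 ∂P1)
        + (1 - lam) * (∫ ω, (lam * ((mixMeasure lam P1 P2)[fun ω' => (P1.rnDeriv (mixMeasure lam P1 P2) ω').toReal | m]) ω) ^ 2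
            * ((P1[ξ | m]) ω - (P2[ξ | m]) ω) ^ 2 ∂P2)) :=
  ⟨condWeight_add_condWeight hm hlam.1.le hlam.2.le,
    condExp_eq_condWeight_mul_add hm hlam (hξ1.integrable one_le_two) (hξ2.integrable one_le_two),
    integral_sq_sub_condExp_mixMeasure hm hlam hξ1 hξ2⟩

/-- strict-convexity identity for the weighted square loss.
With `P^λ = λP₁+(1-λ)P₂`, `λ₁ = λ E_{P^λ}[dP₁/dP^λ|C]`, `λ₂ = (1-λ) E_{P^λ}[dP₂/dP^λ|C]`,
and `η̂ᵢ = E_{Pᵢ}[ξ|C]`: `λ₁+λ₂ = 1`, `E_{P^λ}[ξ|C] = λ₁η̂₁+λ₂η̂₂`, and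
`E_{P^λ}[(ξ-E_{P^λ}[ξ|C])²] = λE_{P₁}[(ξ-η̂₁)²] + (1-λ)E_{P₂}[(ξ-η̂₂)²]
  + λE_{P₁}[λ₂²(η̂₁-η̂₂)²] + (1-λ)E_{P₂}[λ₁²(η̂₁-η̂₂)²]`. -/
theorem stmt16 {Ω : Type*} [m0 : MeasurableSpace Ω] (μ : Measure Ω) [IsProbabilityMeasure μ]
    (P1 P2 : Measure Ω) [IsProbabilityMeasure P1] [IsProbabilityMeasure P2]
    (h1 : P1 ≪ μ) (h1' : μ ≪ P1) (h2 : P2 ≪ μ) (h2' : μ ≪ P2)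
    (m : MeasurableSpace Ω) (hm : m ≤ m0)
    (ξ : Ω → ℝ) (hξ1 : MemLp ξ 2 P1) (hξ2 : MemLp ξ 2 P2)
    (lam : ℝ) (hlam : lam ∈ Set.Ioo (0 : ℝ) 1) :
    (∀ᵐ ω ∂(mixMeasure lam P1 P2),
      lam * ((mixMeasure lam P1 P2)[fun ω' => (P1.rnDeriv (mixMeasure lam P1 P2) ω').toReal | m]) ω
        + (1 - lam) * ((mixMeasure lam P1 P2)[fun ω' => (P2.rnDeriv (mixMeasure lam P1 P2) ω').toReal | m]) ω
        = 1) ∧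
    (((mixMeasure lam P1 P2)[ξ | m]) =ᵐ[mixMeasure lam P1 P2] fun ω =>
      lam * ((mixMeasure lam P1 P2)[fun ω' => (P1.rnDeriv (mixMeasure lam P1 P2) ω').toReal | m]) ω
          * (P1[ξ | m]) ω
        + (1 - lam) * ((mixMeasure lam P1 P2)[fun ω' => (P2.rnDeriv (mixMeasure lam P1 P2) ω').toReal | m]) ω
          * (P2[ξ | m]) ω) ∧
    ((∫ ω, (ξ ω - ((mixMeasure lam P1 P2)[ξ | m]) ω) ^ 2 ∂(mixMeasure lam P1 P2))
      = lam * (∫ ω, (ξ ω - (P1[ξ | m]) ω) ^ 2 ∂P1)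
        + (1 - lam) * (∫ ω, (ξ ω - (P2[ξ | m]) ω) ^ 2 ∂P2)
        + lam * (∫ ω, ((1 - lam) * ((mixMeasure lam P1 P2)[fun ω' => (P2.rnDeriv (mixMeasure lam P1 P2) ω').toReal | m]) ω) ^ 2
            * ((P1[ξ | m]) ω - (P2[ξ | m]) ω) ^ 2 ∂P1)
        + (1 - lam) * (∫ ω, (lam * ((mixMeasure lam P1 P2)[fun ω' => (P1.rnDeriv (mixMeasure lam P1 P2) ω').toReal | m]) ω) ^ 2
            * ((P1[ξ | m]) ω - (P2[ξ | m]) ω) ^ 2 ∂P2)) :=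
  stmt16_general (m0 := m0) P1 P2 m hm ξ hξ1 hξ2 lam hlam
end

section
/- (Properties of the robust MMSE.) Let $\rho$ be a stable, proper, normalized convex operator on $L^p_{\mathcal{F}}(\mathbb{P})$ with representation set $\mathcal{P}$, and for $\xi\in L^{4p}(\mathbb{P})$ let $\rho(\xi|\mathcal{C})$ denote the unique minimizer of $\eta\mapsto\rho((\xi-\eta)^2)$ over $\mathcal{C}$-measurable $\eta\in L^{2p}(\mathbb{P})$, which satisfies $\rho(\xi|\mathcal{C})=E_{\hat P}[\xi|\mathcal{C}]$ for some $\hat P\in\mathcal{P}$. Then: (i) if $C_1\le\xi\le C_2$ a.s. for constants, then $C_1\le\rho(\xi|\mathcal{C})\le C_2$; (ii) $\rho(-\xi|\mathcal{C})=-\rho(\xi|\mathcal{C})$; (iii) $\rho(\xi+\eta_0|\mathcal{C})=\rho(\xi|\mathcal{C})+\eta_0$ for any $\mathcal{C}$-measurable $\eta_0\in L^{2p}(\mathbb{P})$; (iv) if $\xi$ is independent of $\mathcal{C}$ under every $P\in\mathcal{P}$, then $\rho(\xi|\mathcal{C})$ is a.s. constant. -/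
/-!
Parts (ii) and (iii) only use that `ρ(ξ|𝒞)` is the unique minimiser: `η ↦ -η` and
`η ↦ η + η₀` map `𝒞`-measurable `L^{2p}` estimators to themselves and leave the squared error
unchanged once `ξ` is transformed in the same way, so they carry the minimiser of one problem to
that of the other.

Parts (i) and (iv) use the representation `ρ(ξ|𝒞) = E_P̂[ξ|𝒞] = E[ξ f|𝒞] / E[f|𝒞]` (Bayes'
formula for `f = dP̂/dℙ > 0`, so that `E[f|𝒞] > 0`). Monotonicity of conditional expectation gives
(i). For (iv), independence under `P̂` gives `E[ξ f 1_s] = E_P̂[ξ] E[f 1_s]` for `s ∈ 𝒞`, hence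
`E[ξ f|𝒞] = E_P̂[ξ] E[f|𝒞]` and the ratio is the constant `E_P̂[ξ]`.
-/

open MeasureTheory

/-- The convex operator associated with a set `D` of densities and a penalty `α`:
`ρ(ζ) = sup_{f ∈ D} (E[ζ f] - α(f))`. -/
noncomputable def rhoOp {Ω : Type*} {mΩ : MeasurableSpace Ω} (μ : Measure Ω)
    (D : Set (Ω → ℝ)) (α : (Ω → ℝ) → ℝ) (ζ : Ω → ℝ) : ℝ :=
  sSup {x : ℝ | ∃ f ∈ D, x = (∫ ω, ζ ω * f ω ∂μ) - α f}

open ProbabilityTheory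
open scoped ENNReal

section Bayes

variable {Ω : Type*} {m m0 : MeasurableSpace Ω} {μ : Measure Ω}

theorem ae_pos_condExp_of_ae_pos [IsFiniteMeasure μ] (hm : m ≤ m0) {f : Ω → ℝ}
    (hf : Integrable f μ) (hf_pos : ∀ᵐ ω ∂μ, 0 < f ω) : ∀ᵐ ω ∂μ, 0 < μ[f | m] ω := by
  set A : Set Ω := μ[f | m] ⁻¹' Set.Iic 0
  have hA : MeasurableSet[m] A := stronglyMeasurable_condExp.measurable measurableSet_Iic
  have hA_nonpos : ∫ ω in A, f ω ∂μ ≤ 0 := by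
    rw [← setIntegral_condExp hm hf hA]
    exact setIntegral_nonpos (hm _ hA) fun ω hω => hω
  have hμA : μ A = 0 := by
    by_contra hμA
    have hA_pos : 0 < ∫ ω in A, f ω ∂μ := by
      rw [setIntegral_pos_iff_support_of_nonneg_ae
        (ae_restrict_of_ae (hf_pos.mono fun ω h => h.le)) hf.integrableOn]
      have hsupp : (Function.support f ∩ A : Set Ω) =ᵐ[μ] A := by
        rw [Filter.eventuallyEq_set]
        filter_upwards [hf_pos] with ω hω
        simp [hω.ne']
      rw [measure_congr hsupp]
      exact pos_iff_ne_zero.mpr hμA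
    linarith
  rw [ae_iff]
  simp only [not_lt]
  exact hμA

/-- `E_P[ξ | m]` for `dP = f dμ`, by Bayes' formula. -/
noncomputable def bayesCondExp (μ : Measure Ω) (m : MeasurableSpace Ω) (f ξ : Ω → ℝ) :
    Ω → ℝ :=
  fun ω => μ[fun ω' => ξ ω' * f ω' | m] ω / μ[f | m] ω

theorem ae_bayesCondExp_mem_Icc [IsFiniteMeasure μ] (hm : m ≤ m0) {f ξ : Ω → ℝ}
    (hf : Integrable f μ) (hf_pos : ∀ᵐ ω ∂μ, 0 < f ω)
    (hξf : Integrable (fun ω => ξ ω * f ω) μ) {C₁ C₂ : ℝ}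
    (hξ : ∀ᵐ ω ∂μ, ξ ω ∈ Set.Icc C₁ C₂) :
    ∀ᵐ ω ∂μ, bayesCondExp μ m f ξ ω ∈ Set.Icc C₁ C₂ := by
  have hlow : μ[fun ω => C₁ * f ω | m] ≤ᵐ[μ] μ[fun ω => ξ ω * f ω | m] :=
    condExp_mono (hf.const_mul C₁) hξf <| by
      filter_upwards [hξ, hf_pos] with ω hξω hfω
      exact mul_le_mul_of_nonneg_right hξω.1 hfω.le
  have hupp : μ[fun ω => ξ ω * f ω | m] ≤ᵐ[μ] μ[fun ω => C₂ * f ω | m] :=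
    condExp_mono hξf (hf.const_mul C₂) <| by
      filter_upwards [hξ, hf_pos] with ω hξω hfω
      exact mul_le_mul_of_nonneg_right hξω.2 hfω.le
  have h₁ : μ[fun ω => C₁ * f ω | m] =ᵐ[μ] fun ω => C₁ * μ[f | m] ω := condExp_smul C₁ f m
  have h₂ : μ[fun ω => C₂ * f ω | m] =ᵐ[μ] fun ω => C₂ * μ[f | m] ω := condExp_smul C₂ f m
  filter_upwards [hlow, hupp, h₁, h₂, ae_pos_condExp_of_ae_pos hm hf hf_pos]
    with ω hlowω huppω h₁ω h₂ω hpos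
  rw [h₁ω] at hlowω
  rw [h₂ω] at huppω
  exact ⟨(le_div_iff₀ hpos).mpr hlowω, (div_le_iff₀ hpos).mpr huppω⟩

theorem integral_withDensity_ofReal_eq_integral_mul {f : Ω → ℝ} (hf : AEMeasurable f μ)
    (hf_nonneg : 0 ≤ᵐ[μ] f) (g : Ω → ℝ) :
    ∫ ω, g ω ∂μ.withDensity (fun ω => ENNReal.ofReal (f ω)) = ∫ ω, g ω * f ω ∂μ := by
  rw [integral_withDensity_eq_integral_toReal_smul₀ hf.ennreal_ofReal
    (ae_of_all _ fun _ => ENNReal.ofReal_lt_top)]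
  refine integral_congr_ae ?_
  filter_upwards [hf_nonneg] with ω hω
  simp [ENNReal.toReal_ofReal hω, mul_comm]

theorem setIntegral_withDensity_ofReal_eq_setIntegral_mul {f : Ω → ℝ} (hf : AEMeasurable f μ)
    (hf_nonneg : 0 ≤ᵐ[μ] f) (g : Ω → ℝ) {s : Set Ω} (hs : MeasurableSet s) :
    ∫ ω in s, g ω ∂μ.withDensity (fun ω => ENNReal.ofReal (f ω)) = ∫ ω in s, g ω * f ω ∂μ := by
  rw [restrict_withDensity hs]
  exact integral_withDensity_ofReal_eq_integral_mul hf.restrict (ae_restrict_of_ae hf_nonneg) g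

theorem isProbabilityMeasure_withDensity_ofReal {f : Ω → ℝ} (hf : Integrable f μ)
    (hf_nonneg : 0 ≤ᵐ[μ] f) (hf_one : ∫ ω, f ω ∂μ = 1) :
    IsProbabilityMeasure (μ.withDensity fun ω => ENNReal.ofReal (f ω)) := by
  constructor
  rw [withDensity_apply _ MeasurableSet.univ, setLIntegral_univ,
    ← ofReal_integral_eq_lintegral_ofReal hf hf_nonneg, hf_one, ENNReal.ofReal_one]

theorem setIntegral_eq_integral_mul_measureReal_of_indep {P : Measure Ω} [IsProbabilityMeasure P]
    {ξ : Ω → ℝ} (hξ : AEStronglyMeasurable ξ P)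
    (hindep : Indep (MeasurableSpace.comap ξ inferInstance) m P) (hm : m ≤ m0) {s : Set Ω}
    (hs : MeasurableSet[m] s) :
    ∫ ω in s, ξ ω ∂P = (∫ ω, ξ ω ∂P) * P.real s := by
  have hind : IndepFun ξ (s.indicator (1 : Ω → ℝ)) P := by
    rw [IndepFun_iff_Indep]
    exact indep_of_indep_of_le_right hindep
      (measurable_iff_comap_le.mp (measurable_const.indicator hs))
  have hmul := hind.integral_mul_eq_mul_integral hξ
    ((stronglyMeasurable_const.indicator (hm _ hs)).aestronglyMeasurable)
  have hprod : ξ * s.indicator 1 = s.indicator ξ := by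
    ext ω
    by_cases hω : ω ∈ s <;> simp [hω]
  rwa [hprod, integral_indicator (hm _ hs), integral_indicator_one (hm _ hs)] at hmul

theorem bayesCondExp_ae_eq_const_of_indep [IsFiniteMeasure μ] (hm : m ≤ m0) {f ξ : Ω → ℝ}
    (hf : Integrable f μ) (hf_pos : ∀ᵐ ω ∂μ, 0 < f ω) (hf_one : ∫ ω, f ω ∂μ = 1)
    (hξ : AEStronglyMeasurable ξ μ) (hξf : Integrable (fun ω => ξ ω * f ω) μ)
    (hindep : Indep (MeasurableSpace.comap ξ inferInstance) m
      (μ.withDensity fun ω => ENNReal.ofReal (f ω))) :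
    bayesCondExp μ m f ξ =ᵐ[μ] fun _ => ∫ ω, ξ ω * f ω ∂μ := by
  set c := ∫ ω, ξ ω * f ω ∂μ
  set P := μ.withDensity fun ω => ENNReal.ofReal (f ω)
  have hf_nonneg : 0 ≤ᵐ[μ] f := hf_pos.mono fun _ h => h.le
  have : IsProbabilityMeasure P := isProbabilityMeasure_withDensity_ofReal hf hf_nonneg hf_one
  have hset (s : Set Ω) (hs : MeasurableSet[m] s) :
      ∫ ω in s, c * μ[f | m] ω ∂μ = ∫ ω in s, ξ ω * f ω ∂μ := by
    have hP_mean : ∫ ω, ξ ω ∂P = c :=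
      integral_withDensity_ofReal_eq_integral_mul hf.aemeasurable hf_nonneg ξ
    have hP_set : ∫ ω in s, ξ ω ∂P = ∫ ω in s, ξ ω * f ω ∂μ :=
      setIntegral_withDensity_ofReal_eq_setIntegral_mul hf.aemeasurable hf_nonneg ξ (hm _ hs)
    have hP_real : P.real s = ∫ ω in s, f ω ∂μ := by
      simpa using setIntegral_withDensity_ofReal_eq_setIntegral_mul hf.aemeasurable hf_nonneg
        (fun _ => (1 : ℝ)) (hm _ hs)
    rw [integral_const_mul, setIntegral_condExp hm hf hs, ← hP_set, ← hP_mean, ← hP_real]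
    exact (setIntegral_eq_integral_mul_measureReal_of_indep
      (hξ.mono_ac (withDensity_absolutelyContinuous _ _)) hindep hm hs).symm
  have hcond : (fun ω => c * μ[f | m] ω) =ᵐ[μ] μ[fun ω => ξ ω * f ω | m] :=
    ae_eq_condExp_of_forall_setIntegral_eq hm hξf
      (fun _ _ _ => (integrable_condExp.const_mul c).integrableOn) (fun s hs _ => hset s hs)
      (stronglyMeasurable_condExp.const_mul c).aestronglyMeasurable
  filter_upwards [hcond, ae_pos_condExp_of_ae_pos hm hf hf_pos] with ω hω hpos
  rw [bayesCondExp, ← hω]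
  field_simp

end Bayes

section LeastSquares

variable {Ω : Type*}

def memLpMeasAddSubgroup (m : MeasurableSpace Ω) {m0 : MeasurableSpace Ω} (r : ℝ≥0∞)
    (μ : Measure[m0] Ω) : AddSubgroup (Ω → ℝ) where
  carrier := {η | MemLp η r μ ∧ AEStronglyMeasurable[m] η μ}
  add_mem' ha hb := ⟨ha.1.add hb.1, ha.2.add hb.2⟩
  zero_mem' := ⟨MemLp.zero, aestronglyMeasurable_zero⟩
  neg_mem' ha := ⟨ha.1.neg, ha.2.neg⟩

variable {mΩ : MeasurableSpace Ω}

def IsUniqueLeastSquaresEstimator (μ : Measure Ω) (ρ : (Ω → ℝ) → ℝ) (X : Set (Ω → ℝ))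
    (A : AddSubgroup (Ω → ℝ)) (est : (Ω → ℝ) → Ω → ℝ) : Prop :=
  ∀ ξ ∈ X, est ξ ∈ A ∧ IsMinOn (fun η => ρ fun ω => (ξ ω - η ω) ^ 2) A (est ξ) ∧
    ∀ η ∈ A, ρ (fun ω => (ξ ω - η ω) ^ 2) = ρ (fun ω => (ξ ω - est ξ ω) ^ 2) → η =ᵐ[μ] est ξ

namespace IsUniqueLeastSquaresEstimator

variable {μ : Measure Ω} {ρ : (Ω → ℝ) → ℝ} {X : Set (Ω → ℝ)} {A : AddSubgroup (Ω → ℝ)}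
  {est : (Ω → ℝ) → Ω → ℝ}

theorem ae_eq_of_sq_sub_eq (h : IsUniqueLeastSquaresEstimator μ ρ X A est) {ξ ξ' η η' : Ω → ℝ}
    (hξ : ξ ∈ X) (hξ' : ξ' ∈ X) (hη : η ∈ A) (hη' : η' ∈ A)
    (hsq : ∀ ω, (ξ' ω - η ω) ^ 2 = (ξ ω - est ξ ω) ^ 2)
    (hsq' : ∀ ω, (ξ ω - η' ω) ^ 2 = (ξ' ω - est ξ' ω) ^ 2) :
    η =ᵐ[μ] est ξ' := by
  obtain ⟨-, hmin, -⟩ := h ξ hξ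
  obtain ⟨-, hmin', huniq'⟩ := h ξ' hξ'
  refine huniq' η hη (le_antisymm ?_ (isMinOn_iff.mp hmin' η hη))
  calc ρ (fun ω => (ξ' ω - η ω) ^ 2) = ρ (fun ω => (ξ ω - est ξ ω) ^ 2) := by simp_rw [hsq]
    _ ≤ ρ (fun ω => (ξ ω - η' ω) ^ 2) := isMinOn_iff.mp hmin η' hη'
    _ = ρ (fun ω => (ξ' ω - est ξ' ω) ^ 2) := by simp_rw [hsq']

theorem neg (h : IsUniqueLeastSquaresEstimator μ ρ X A est) {ξ : Ω → ℝ} (hξ : ξ ∈ X)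
    (hξ_neg : (fun ω => -ξ ω) ∈ X) :
    est (fun ω => -ξ ω) =ᵐ[μ] fun ω => -est ξ ω :=
  (h.ae_eq_of_sq_sub_eq (η := fun ω => -est ξ ω) (η' := fun ω => -est (fun ω => -ξ ω) ω) hξ
    hξ_neg (A.neg_mem (h ξ hξ).1) (A.neg_mem (h _ hξ_neg).1) (fun _ => by ring)
    (fun _ => by ring)).symm

theorem add (h : IsUniqueLeastSquaresEstimator μ ρ X A est) {ξ η₀ : Ω → ℝ} (hξ : ξ ∈ X)
    (hξη₀ : (fun ω => ξ ω + η₀ ω) ∈ X) (hη₀ : η₀ ∈ A) :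
    est (fun ω => ξ ω + η₀ ω) =ᵐ[μ] fun ω => est ξ ω + η₀ ω :=
  (h.ae_eq_of_sq_sub_eq (η := fun ω => est ξ ω + η₀ ω)
    (η' := fun ω => est (fun ω => ξ ω + η₀ ω) ω - η₀ ω) hξ hξη₀ (A.add_mem (h ξ hξ).1 hη₀)
    (A.sub_mem (h _ hξη₀).1 hη₀) (fun _ => by ring) (fun _ => by ring)).symm

end IsUniqueLeastSquaresEstimator

end LeastSquares

theorem stmt17_general {Ω : Type*} [m0 : MeasurableSpace Ω] (μ : Measure Ω) [IsProbabilityMeasure μ]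
    (p q : ℝ) (hpq : p.HolderConjugate q)
    (m : MeasurableSpace Ω) (hm : m ≤ m0)
    (D : Set (Ω → ℝ))
    -- proper priors: strictly positive probability densities in `L^q`
    (hD : ∀ f ∈ D, (∀ᵐ ω ∂μ, 0 < f ω) ∧ Integrable f μ ∧ (∫ ω, f ω ∂μ) = 1 ∧
      MemLp f (ENNReal.ofReal q) μ)
    (α : (Ω → ℝ) → ℝ)
    -- the robust conditional estimator and its defining properties
    (condRho : (Ω → ℝ) → (Ω → ℝ))
    (hmeas : ∀ ξ : Ω → ℝ, MemLp ξ (ENNReal.ofReal (4 * p)) μ →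
      AEStronglyMeasurable[m] (condRho ξ) μ ∧ MemLp (condRho ξ) (ENNReal.ofReal (2 * p)) μ)
    (hmin : ∀ ξ : Ω → ℝ, MemLp ξ (ENNReal.ofReal (4 * p)) μ →
      ∀ η : Ω → ℝ, MemLp η (ENNReal.ofReal (2 * p)) μ → AEStronglyMeasurable[m] η μ →
        rhoOp μ D α (fun ω => (ξ ω - condRho ξ ω) ^ 2) ≤
          rhoOp μ D α (fun ω => (ξ ω - η ω) ^ 2))
    (huniq : ∀ ξ : Ω → ℝ, MemLp ξ (ENNReal.ofReal (4 * p)) μ →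
      ∀ η : Ω → ℝ, MemLp η (ENNReal.ofReal (2 * p)) μ → AEStronglyMeasurable[m] η μ →
        rhoOp μ D α (fun ω => (ξ ω - η ω) ^ 2) =
          rhoOp μ D α (fun ω => (ξ ω - condRho ξ ω) ^ 2) →
        η =ᵐ[μ] condRho ξ)
    (hrep : ∀ ξ : Ω → ℝ, MemLp ξ (ENNReal.ofReal (4 * p)) μ →
      ∃ f ∈ D, condRho ξ =ᵐ[μ] fun ω => (μ[fun ω' => ξ ω' * f ω' | m]) ω / (μ[f | m]) ω)
    (ξ : Ω → ℝ) (hξ : MemLp ξ (ENNReal.ofReal (4 * p)) μ) :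
    -- (i)
    (∀ C1 C2 : ℝ, (∀ᵐ ω ∂μ, C1 ≤ ξ ω ∧ ξ ω ≤ C2) →
      ∀ᵐ ω ∂μ, C1 ≤ condRho ξ ω ∧ condRho ξ ω ≤ C2) ∧
    -- (ii)
    (condRho (fun ω => -ξ ω) =ᵐ[μ] fun ω => -condRho ξ ω) ∧
    -- (iii)
    (∀ η0 : Ω → ℝ, MemLp η0 (ENNReal.ofReal (2 * p)) μ → AEStronglyMeasurable[m] η0 μ →
      MemLp (fun ω => ξ ω + η0 ω) (ENNReal.ofReal (4 * p)) μ →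
      condRho (fun ω => ξ ω + η0 ω) =ᵐ[μ] fun ω => condRho ξ ω + η0 ω) ∧
    -- (iv)
    ((∀ f ∈ D, ProbabilityTheory.Indep (MeasurableSpace.comap ξ inferInstance) m
        (μ.withDensity fun ω => ENNReal.ofReal (f ω))) →
      ∃ c : ℝ, condRho ξ =ᵐ[μ] fun _ => c) := by
  have hest : IsUniqueLeastSquaresEstimator μ (rhoOp μ D α)
      {ξ | MemLp ξ (ENNReal.ofReal (4 * p)) μ} (memLpMeasAddSubgroup m (ENNReal.ofReal (2 * p)) μ)
      condRho := fun ξ hξ =>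
    ⟨(hmeas ξ hξ).symm, isMinOn_iff.mpr fun η hη => hmin ξ hξ η hη.1 hη.2,
      fun η hη => huniq ξ hξ η hη.1 hη.2⟩
  obtain ⟨f, hfD, hrepξ⟩ := hrep ξ hξ
  obtain ⟨hf_pos, hf, hf_one, hf_q⟩ := hD f hfD
  have hξf : Integrable (fun ω => ξ ω * f ω) μ := by
    have := hpq.ennrealOfReal
    exact (hξ.mono_exponent (ENNReal.ofReal_le_ofReal (by linarith [hpq.nonneg]))).integrable_mul
      hf_q
  refine ⟨fun C₁ C₂ hC => ?_, hest.neg hξ hξ.neg,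
    fun η₀ hη₀ hη₀_meas hξη₀ => hest.add hξ hξη₀ ⟨hη₀, hη₀_meas⟩,
    fun hindep => ⟨_, hrepξ.trans <| bayesCondExp_ae_eq_const_of_indep hm hf hf_pos hf_one
      hξ.aestronglyMeasurable hξf (hindep f hfD)⟩⟩
  filter_upwards [hrepξ, ae_bayesCondExp_mem_Icc hm hf hf_pos hξf hC] with ω hω hω_mem
  rwa [hω]

/-- properties of the robust MMSE `ρ(ξ|C)`.
Here `ρ` is a stable, proper, normalized convex operator given by its dual
representation over the density set `D` with penalty `α`; `condRho ξ` denotes the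
(unique) minimizer of `η ↦ ρ((ξ-η)²)` over `C`-measurable `η ∈ L^{2p}`, which is of
the form `E_{P̂}[ξ|C]` for some `P̂ ∈ 𝒫`.  Then:
(i) `C₁ ≤ ξ ≤ C₂` a.s. implies `C₁ ≤ ρ(ξ|C) ≤ C₂` a.s.;
(ii) `ρ(-ξ|C) = -ρ(ξ|C)`;
(iii) `ρ(ξ+η₀|C) = ρ(ξ|C) + η₀` for `C`-measurable `η₀ ∈ L^{2p}`;
(iv) if `ξ` is independent of `C` under every `P ∈ 𝒫`, then `ρ(ξ|C)` is a.s. constant. -/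
theorem stmt17 {Ω : Type*} [m0 : MeasurableSpace Ω] (μ : Measure Ω) [IsProbabilityMeasure μ]
    (p q : ℝ) (hp1 : 1 < p) (hp2 : p ≤ 2) (hpq : p.HolderConjugate q)
    (m : MeasurableSpace Ω) (hm : m ≤ m0)
    (D : Set (Ω → ℝ)) (hDne : D.Nonempty)
    -- proper priors: strictly positive probability densities in `L^q`
    (hD : ∀ f ∈ D, (∀ᵐ ω ∂μ, 0 < f ω) ∧ Integrable f μ ∧ (∫ ω, f ω ∂μ) = 1 ∧
      MemLp f (ENNReal.ofReal q) μ)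
    -- stability of the representation set
    (hstable : ∀ f ∈ D, (fun ω => f ω / (μ[f | m]) ω) ∈ D)
    (α : (Ω → ℝ) → ℝ)
    -- normalization `ρ(0) = 0`
    (hnorm : rhoOp μ D α (fun _ => 0) = 0)
    -- the robust conditional estimator and its defining properties
    (condRho : (Ω → ℝ) → (Ω → ℝ))
    (hmeas : ∀ ξ : Ω → ℝ, MemLp ξ (ENNReal.ofReal (4 * p)) μ →
      AEStronglyMeasurable[m] (condRho ξ) μ ∧ MemLp (condRho ξ) (ENNReal.ofReal (2 * p)) μ)
    (hmin : ∀ ξ : Ω → ℝ, MemLp ξ (ENNReal.ofReal (4 * p)) μ →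
      ∀ η : Ω → ℝ, MemLp η (ENNReal.ofReal (2 * p)) μ → AEStronglyMeasurable[m] η μ →
        rhoOp μ D α (fun ω => (ξ ω - condRho ξ ω) ^ 2) ≤
          rhoOp μ D α (fun ω => (ξ ω - η ω) ^ 2))
    (huniq : ∀ ξ : Ω → ℝ, MemLp ξ (ENNReal.ofReal (4 * p)) μ →
      ∀ η : Ω → ℝ, MemLp η (ENNReal.ofReal (2 * p)) μ → AEStronglyMeasurable[m] η μ →
        rhoOp μ D α (fun ω => (ξ ω - η ω) ^ 2) =
          rhoOp μ D α (fun ω => (ξ ω - condRho ξ ω) ^ 2) →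
        η =ᵐ[μ] condRho ξ)
    (hrep : ∀ ξ : Ω → ℝ, MemLp ξ (ENNReal.ofReal (4 * p)) μ →
      ∃ f ∈ D, condRho ξ =ᵐ[μ] fun ω => (μ[fun ω' => ξ ω' * f ω' | m]) ω / (μ[f | m]) ω)
    (ξ : Ω → ℝ) (hξ : MemLp ξ (ENNReal.ofReal (4 * p)) μ) :
    -- (i)
    (∀ C1 C2 : ℝ, (∀ᵐ ω ∂μ, C1 ≤ ξ ω ∧ ξ ω ≤ C2) →
      ∀ᵐ ω ∂μ, C1 ≤ condRho ξ ω ∧ condRho ξ ω ≤ C2) ∧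
    -- (ii)
    (condRho (fun ω => -ξ ω) =ᵐ[μ] fun ω => -condRho ξ ω) ∧
    -- (iii)
    (∀ η0 : Ω → ℝ, MemLp η0 (ENNReal.ofReal (2 * p)) μ → AEStronglyMeasurable[m] η0 μ →
      MemLp (fun ω => ξ ω + η0 ω) (ENNReal.ofReal (4 * p)) μ →
      condRho (fun ω => ξ ω + η0 ω) =ᵐ[μ] fun ω => condRho ξ ω + η0 ω) ∧
    -- (iv)
    ((∀ f ∈ D, ProbabilityTheory.Indep (MeasurableSpace.comap ξ inferInstance) m
        (μ.withDensity fun ω => ENNReal.ofReal (f ω))) →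
      ∃ c : ℝ, condRho ξ =ᵐ[μ] fun _ => c) :=
  stmt17_general (m0 := m0) μ p q hpq m hm D hD α condRho hmeas hmin huniq hrep ξ hξ
end
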